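/- Suppose R is weakly-commutator of some length k and normal. Then R is stable. -/

import Mathlib

/- Common definitions: linear groups over an associative ring with identity,
transvections, elementary subgroups, congruence subgroups, and the
stability-theoretic properties of rings, following V. M. Petechuk,
"Stability of rings". Throughout, `GL(n,R)` is realized as the group of
units `(Matrix (Fin n) (Fin n) R)ˣ`. -/

open Matrix

section Defs

variable (n : ℕ) (R : Type*) [Ring R]

/-- A transvection: an invertible matrix of the form `1 + r·e_{ij}` with `i ≠ j`. -/
def IsTransvection {n : ℕ} {R : Type*} [Ring R] (g : (Matrix (Fin n) (Fin n) R)ˣ) : Prop :=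
  ∃ i j : Fin n, i ≠ j ∧ ∃ r : R, g.val = 1 + single i j r

/-- `E_X`: the subgroup of `GL(n,R)` generated by the transvections `t_{ij}(x)`, `x ∈ X`,
`i ≠ j`. -/
def Esub (X : Set R) : Subgroup (Matrix (Fin n) (Fin n) R)ˣ :=
  Subgroup.closure {g | ∃ i j : Fin n, i ≠ j ∧ ∃ x ∈ X, g.val = 1 + single i j x}

/-- `E(n,R) = E_R`. -/
def En : Subgroup (Matrix (Fin n) (Fin n) R)ˣ := Esub n R Set.univ

/-- `E(n,I)`: the normal closure of `E_I` in `E(n,R)`. -/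
def EnI {R : Type*} [Ring R] (I : TwoSidedIdeal R) : Subgroup (Matrix (Fin n) (Fin n) R)ˣ :=
  Subgroup.closure {g | ∃ h ∈ En n R, ∃ e ∈ Esub n R (I : Set R), g = h * e * h⁻¹}

/-- `Λ_I`: entrywise reduction `GL(n,R) → GL(n, R/I)`. -/
def lamI {R : Type*} [Ring R] (I : TwoSidedIdeal R) :
    (Matrix (Fin n) (Fin n) R)ˣ →* (Matrix (Fin n) (Fin n) I.ringCon.Quotient)ˣ :=
  Units.map ((RingCon.mk' I.ringCon).mapMatrix.toMonoidHom)

/-- `C_I = ker Λ_I`: the principal congruence subgroup of level `I`. -/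
def CIsub {R : Type*} [Ring R] (I : TwoSidedIdeal R) : Subgroup (Matrix (Fin n) (Fin n) R)ˣ :=
  (lamI n I).ker

/-- `C(n,I) = Λ_I⁻¹(ξGL(n,R/I))`. -/
def CnI {R : Type*} [Ring R] (I : TwoSidedIdeal R) : Subgroup (Matrix (Fin n) (Fin n) R)ˣ :=
  (Subgroup.center _).comap (lamI n I)

/-- `R` is a commutator ring: `[C(n,I), E(n,R)] = E(n,I) ⊴ GL(n,R)` for every
two-sided ideal `I`. -/
def IsCommutatorRing : Prop :=
  ∀ I : TwoSidedIdeal R, ⁅CnI n I, En n R⁆ = EnI n I ∧ (EnI n I).Normal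

/-- Iterated commutator subgroup `[H, K, K, …, K]` (`k` copies of `K`). -/
def iterCommutator {G : Type*} [Group G] (H K : Subgroup G) : ℕ → Subgroup G
  | 0 => H
  | m + 1 => ⁅iterCommutator H K m, K⁆

/-- `R` is weakly-commutator of length `k`:
`[C(n,I), E(n,R), …, E(n,R)] = E(n,I) ⊴ GL(n,R)` (`k` copies of `E(n,R)`)
simultaneously for every two-sided ideal `I`. -/
def IsWeaklyCommutatorRing (k : ℕ) : Prop :=
  0 < k ∧ ∀ I : TwoSidedIdeal R,
    iterCommutator (CnI n I) (En n R) k = EnI n I ∧ (EnI n I).Normal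

/-- `R` is a normal ring: every subgroup invariant under conjugation by `E(n,R)` is
squeezed between `E(n,I)` and `C(n,I)` for some two-sided ideal `I`. -/
def IsNormalRing : Prop :=
  ∀ G : Subgroup (Matrix (Fin n) (Fin n) R)ˣ,
    (∀ e ∈ En n R, ∀ g ∈ G, e * g * e⁻¹ ∈ G) →
    ∃ I : TwoSidedIdeal R, EnI n I ≤ G ∧ G ≤ CnI n I

/-- `R` is partially normal: every subgroup invariant under conjugation by `E(n,R)`
containing no non-identity transvection is contained in the center of `GL(n,R)`. -/
def IsPartiallyNormalRing : Prop :=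
  ∀ N : Subgroup (Matrix (Fin n) (Fin n) R)ˣ,
    (∀ e ∈ En n R, ∀ g ∈ N, e * g * e⁻¹ ∈ N) →
    (∀ g ∈ N, IsTransvection g → g = 1) →
    N ≤ Subgroup.center _

/-- `R` is stable: both commutator and normal. -/
def IsStableRing : Prop := IsCommutatorRing n R ∧ IsNormalRing n R

/-- The annihilator `Ann I = {r | rI = Ir = 0}` of a two-sided ideal, as a two-sided ideal. -/
def annIdeal {R : Type*} [Ring R] (I : TwoSidedIdeal R) : TwoSidedIdeal R :=
  TwoSidedIdeal.mk' {r : R | ∀ a ∈ I, r * a = 0 ∧ a * r = 0}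
    (fun a _ => ⟨zero_mul a, mul_zero a⟩)
    (fun {x y} hx hy a ha => by
      refine ⟨?_, ?_⟩
      · rw [add_mul, (hx a ha).1, (hy a ha).1, add_zero]
      · rw [mul_add, (hx a ha).2, (hy a ha).2, add_zero])
    (fun {x} hx a ha => by
      refine ⟨?_, ?_⟩
      · rw [neg_mul, (hx a ha).1, neg_zero]
      · rw [mul_neg, (hx a ha).2, neg_zero])
    (fun {x y} hy a ha => by
      refine ⟨?_, ?_⟩
      · rw [mul_assoc, (hy a ha).1, mul_zero]
      · rw [← mul_assoc]
        exact (hy (a * x) (I.mul_mem_right a x ha)).2)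
    (fun {x y} hx a ha => by
      refine ⟨?_, ?_⟩
      · rw [mul_assoc]
        exact (hx (y * a) (I.mul_mem_left y a ha)).1
      · rw [← mul_assoc, (hx a ha).2, zero_mul])

end Defs

/-! Modulo the normal subgroup `E(n,I)`, the `k`-fold commutator `[C(n,I), E(n,R), …, E(n,R)]`
is trivial. Since `E(n,R)` is perfect for `n ≥ 3`, the three subgroup lemma removes one copy
of `E(n,R)` at a time, so `[C(n,I), E(n,R)] ≤ E(n,I)`; the reverse inclusion holds because
`C(n,I)` is normal, so the iterated commutators only shrink.
-/

open scoped commutatorElement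

section IterCommutator

variable {G : Type*} [Group G]

lemma map_iterCommutator {G' : Type*} [Group G'] (f : G →* G') (H K : Subgroup G) :
    ∀ m, (iterCommutator H K m).map f = iterCommutator (H.map f) (K.map f) m
  | 0 => rfl
  | m + 1 => by
    rw [iterCommutator, Subgroup.map_commutator, map_iterCommutator f H K m, iterCommutator]

lemma iterCommutator_le_self {H : Subgroup G} [H.Normal] (K : Subgroup G) :
    ∀ m, iterCommutator H K m ≤ H
  | 0 => le_rfl
  | m + 1 =>
    (Subgroup.commutator_mono (iterCommutator_le_self K m) le_rfl).trans
      (Subgroup.commutator_le_left _ _)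

lemma iterCommutator_succ_le_commutator {H : Subgroup G} [H.Normal] (K : Subgroup G) :
    ∀ m, iterCommutator H K (m + 1) ≤ ⁅H, K⁆
  | 0 => le_rfl
  | m + 1 => Subgroup.commutator_mono (iterCommutator_le_self K (m + 1)) le_rfl

/-- By the three subgroup lemma, `[[K, K], A] = 1`, and `[K, K] = K`. -/
lemma commutator_eq_bot_of_commutator_commutator_eq_bot {A K : Subgroup G} (hK : ⁅K, K⁆ = K)
    (h : ⁅⁅A, K⁆, K⁆ = ⊥) : ⁅A, K⁆ = ⊥ := by
  have hrot : ⁅⁅K, A⁆, K⁆ = ⊥ := by rwa [Subgroup.commutator_comm K A]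
  have hKKA : ⁅⁅K, K⁆, A⁆ = ⊥ := Subgroup.commutator_commutator_eq_bot_of_rotate hrot h
  rwa [hK, Subgroup.commutator_comm] at hKKA

lemma commutator_eq_bot_of_iterCommutator_eq_bot {H K : Subgroup G} (hK : ⁅K, K⁆ = K) :
    ∀ m, iterCommutator H K (m + 1) = ⊥ → ⁅H, K⁆ = ⊥
  | 0, h => h
  | m + 1, h =>
    commutator_eq_bot_of_iterCommutator_eq_bot hK m
      (commutator_eq_bot_of_commutator_commutator_eq_bot hK h)

lemma commutator_le_of_iterCommutator_le {H K N : Subgroup G} [N.Normal] (hK : ⁅K, K⁆ = K)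
    (m : ℕ) (h : iterCommutator H K (m + 1) ≤ N) : ⁅H, K⁆ ≤ N := by
  set φ := QuotientGroup.mk' N
  have hker : φ.ker = N := QuotientGroup.ker_mk' N
  have hKφ : ⁅K.map φ, K.map φ⁆ = K.map φ := by rw [← Subgroup.map_commutator, hK]
  have hiter : iterCommutator (H.map φ) (K.map φ) (m + 1) = ⊥ := by
    rwa [← map_iterCommutator, Subgroup.map_eq_bot_iff, hker]
  have hHK := commutator_eq_bot_of_iterCommutator_eq_bot hKφ m hiter
  rwa [← Subgroup.map_commutator, Subgroup.map_eq_bot_iff, hker] at hHK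

end IterCommutator

section Transvection

variable {n : ℕ} {R : Type*} [Ring R]

lemma one_add_mul_one_sub_of_mul_self_eq_zero {A : Type*} [Ring A] {a : A} (h : a * a = 0) :
    (1 + a) * (1 - a) = 1 := by
  rw [mul_sub, mul_one, add_mul, one_mul, h, add_zero, add_sub_cancel_right]

lemma one_sub_mul_one_add_of_mul_self_eq_zero {A : Type*} [Ring A] {a : A} (h : a * a = 0) :
    (1 - a) * (1 + a) = 1 := by
  rw [sub_mul, one_mul, mul_add, mul_one, h, add_zero, add_sub_cancel_right]

lemma one_add_mul_one_add_mul_one_sub_mul_one_sub {A : Type*} [Ring A] {p q : A}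
    (hp : p * p = 0) (hq : q * q = 0) (hqp : q * p = 0) :
    (1 + p) * (1 + q) * ((1 - p) * (1 - q)) = 1 + p * q := by
  have hpqp : p * q * p = 0 := by rw [mul_assoc, hqp, mul_zero]
  have hpqq : p * q * q = 0 := by rw [mul_assoc, hq, mul_zero]
  have expand : (1 + p) * (1 + q) * ((1 - p) * (1 - q)) =
      1 + p * q - p * p + p * p * q - q * p - q * q + q * p * q - p * q * p - p * q * q
        + p * q * p * q := by
    noncomm_ring
  rw [expand, hp, hq, hqp, hpqp, hpqq]
  simp

variable (R) in
def transvectionUnit {i j : Fin n} (hij : i ≠ j) (r : R) : (Matrix (Fin n) (Fin n) R)ˣ where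
  val := 1 + single i j r
  inv := 1 - single i j r
  val_inv := one_add_mul_one_sub_of_mul_self_eq_zero <|
    single_mul_single_of_ne (c := r) i j i hij.symm r
  inv_val := one_sub_mul_one_add_of_mul_self_eq_zero <|
    single_mul_single_of_ne (c := r) i j i hij.symm r

lemma commutator_transvectionUnit {i l j : Fin n} (hil : i ≠ l) (hlj : l ≠ j) (hij : i ≠ j)
    (x : R) :
    ⁅transvectionUnit R hil x, transvectionUnit R hlj 1⁆ = transvectionUnit R hij x := by
  apply Units.ext
  rw [commutatorElement_def, Units.val_mul, Units.val_mul, Units.val_mul, mul_assoc]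
  show (1 + single i l x) * (1 + single l j 1) * ((1 - single i l x) * (1 - single l j 1)) =
    1 + single i j x
  rw [one_add_mul_one_add_mul_one_sub_mul_one_sub
      (single_mul_single_of_ne (c := x) i l i hil.symm x)
      (single_mul_single_of_ne (c := (1 : R)) l j l hlj.symm 1)
      (single_mul_single_of_ne (c := (1 : R)) l j i hij.symm x),
    single_mul_single_same, mul_one]

lemma transvectionUnit_mem_En {i j : Fin n} (hij : i ≠ j) (x : R) :
    transvectionUnit R hij x ∈ En n R :=
  Subgroup.subset_closure ⟨i, j, hij, x, Set.mem_univ x, rfl⟩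

lemma exists_ne_and_ne_of_three_le (hn : 3 ≤ n) (i j : Fin n) :
    ∃ l : Fin n, l ≠ i ∧ l ≠ j := by
  have hcard : ({i, j} : Finset (Fin n)).card < (Finset.univ : Finset (Fin n)).card := by
    rw [Finset.card_univ, Fintype.card_fin]
    exact (Finset.card_le_two).trans_lt (by omega)
  obtain ⟨l, -, hl⟩ := Finset.exists_mem_notMem_of_card_lt_card hcard
  simp only [Finset.mem_insert, Finset.mem_singleton, not_or] at hl
  exact ⟨l, hl⟩

/-- `t_{ij}(x) = [t_{il}(x), t_{lj}(1)]` for any third index `l`, which exists as `n ≥ 3`. -/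
lemma commutator_En_self (hn : 3 ≤ n) : ⁅En n R, En n R⁆ = En n R := by
  refine le_antisymm (En n R).commutator_le_self ?_
  rw [En, Esub, Subgroup.closure_le]
  rintro g ⟨i, j, hij, x, -, hg⟩
  obtain ⟨l, hli, hlj⟩ := exists_ne_and_ne_of_three_le hn i j
  rw [SetLike.mem_coe, show g = transvectionUnit R hij x from Units.ext hg,
    ← commutator_transvectionUnit hli.symm hlj hij x]
  exact Subgroup.commutator_mem_commutator (transvectionUnit_mem_En _ _)
    (transvectionUnit_mem_En _ _)

end Transvection

instance CnI.normal {n : ℕ} {R : Type*} [Ring R] (I : TwoSidedIdeal R) : (CnI n I).Normal :=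
  Subgroup.Normal.comap inferInstance _

/-- a weakly-commutator normal ring is stable. -/
theorem statement3 {R : Type*} [Ring R] {n : ℕ} (hn : 3 ≤ n) (k : ℕ)
    (hwc : IsWeaklyCommutatorRing n R k)
    (hnorm : IsNormalRing n R) :
    IsStableRing n R := by
  obtain ⟨hk, hwcI⟩ := hwc
  obtain ⟨m, rfl⟩ := Nat.exists_eq_add_one_of_ne_zero hk.ne'
  refine ⟨fun I => ?_, hnorm⟩
  obtain ⟨hiter, hnormal⟩ := hwcI I
  refine ⟨le_antisymm ?_ (hiter ▸ iterCommutator_succ_le_commutator _ m), hnormal⟩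
  exact commutator_le_of_iterCommutator_le (commutator_En_self hn) m hiter.le
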